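/- arXiv:2208.11341 — 9 statements merged into one kernel-verified Lean document; each statement's English description precedes it below -/
import Mathlib

section
/- For every positive integer n, the number 3(n+1)^2 + n is not a perfect square. -/
lemma pell13 : ∀ x : ℕ, ∀ y : ℤ, ((x:ℤ))^2 = 3*y^2 + 13 → x % 6 = 1 → 2 ∣ y → False := by
  intro x
  induction x using Nat.strong_induction_on with
  | _ x IH =>
    intro y hxy hx6 hy2
    obtain ⟨Y, hYsq, hY2⟩ : ∃ Y : ℕ, ((Y:ℤ))^2 = y^2 ∧ 2 ∣ Y := by
      refine ⟨y.natAbs, ?_, Int.natAbs_dvd_natAbs.mpr hy2⟩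
      push_cast; simp [abs_abs, sq_abs]
    have hxY : ((x:ℤ))^2 = 3*(Y:ℤ)^2 + 13 := by rw [hYsq]; exact hxy
    clear hxy hYsq hy2 y
    by_cases hsmall : Y ≤ 3
    · have hnat : x^2 = 3*Y^2 + 13 := by exact_mod_cast hxY
      have hx5 : x ≤ 6 := by nlinarith
      interval_cases x <;> interval_cases Y <;> omega
    · push_neg at hsmall
      have hYpos : (4:ℤ) ≤ (Y:ℤ) := by exact_mod_cast hsmall
      have hX0 : 0 ≤ (x:ℤ) := Int.natCast_nonneg x
      have h1 : 12 * (Y:ℤ) < 7 * (x:ℤ) := by nlinarith [sq_nonneg ((x:ℤ) - 2*(Y:ℤ))]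
      have h2 : (x:ℤ) < 2 * (Y:ℤ) := by nlinarith
      have h1n : 12 * Y < 7 * x := by exact_mod_cast h1
      have h2n : x < 2 * Y := by exact_mod_cast h2
      have hnxZ : (((7 * x - 12 * Y : ℕ)):ℤ) = 7 * (x:ℤ) - 12 * (Y:ℤ) := by
        push_cast [Nat.cast_sub (le_of_lt h1n)]; ring
      refine IH (7 * x - 12 * Y) (by omega) (7 * (Y:ℤ) - 4 * (x:ℤ)) ?_ (by omega) ?_
      · rw [hnxZ]; nlinarith
      · obtain ⟨k, hk⟩ := hY2
        have : (Y:ℤ) = 2 * k := by exact_mod_cast hk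
        omega

theorem stmt_2 (n : ℕ) (hn : 0 < n) : ¬ ∃ s : ℕ, s ^ 2 = 3 * (n + 1) ^ 2 + n := by
  rintro ⟨s, hs⟩
  apply pell13 (6 * n + 7) (2 * s)
  · have : (s:ℤ)^2 = 3 * ((n:ℤ)+1)^2 + n := by exact_mod_cast hs
    push_cast
    nlinarith
  · omega
  · exact ⟨s, by ring⟩
end

section
/- A polynomial f ∈ ℂ[z] solves the conditions (f(z₀) = a ⇒ f'(z₀) = a) and (f'(z₀) = b ⇒ f(z₀) = b) for all z₀ ∈ ℂ, where a, b are nonzero with a ≠ b, if and only if f(z) = a·z + B for some constant B, or f is a constant B with B ≠ a. -/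
open Polynomial

theorem stmt_7 (a b : ℂ) (ha : a ≠ 0) (hb : b ≠ 0) (hab : a ≠ b) (f : ℂ[X]) :
    (∀ z₀ : ℂ, (f.eval z₀ = a → f.derivative.eval z₀ = a) ∧
      (f.derivative.eval z₀ = b → f.eval z₀ = b)) ↔
    ((∃ B : ℂ, f = C a * X + C B) ∨ (∃ B : ℂ, f = C B ∧ B ≠ a)) := by
  constructor
  · intro h
    by_cases hd0 : f.natDegree = 0
    · right
      refine ⟨f.coeff 0, (eq_C_of_natDegree_eq_zero hd0), ?_⟩
      intro hBa
      have h0 := (h 0).1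
      rw [eq_C_of_natDegree_eq_zero hd0] at h0
      simp [hBa] at h0
      exact ha h0.symm
    · -- nonconstant case
      have hd1 : 1 ≤ f.natDegree := Nat.one_le_iff_ne_zero.mpr hd0
      set g : ℂ[X] := f - C a with hg
      have hgd : g.natDegree = f.natDegree := by
        apply natDegree_sub_C
      have hgne : g ≠ 0 := fun h0 => by
        have : g.natDegree = 0 := by rw [h0]; simp
        omega
      -- every root of g is simple and is a root of f' - C a
      have hsimple : ∀ z, g.rootMultiplicity z ≤ 1 := by
        intro z
        by_contra hlt
        push_neg at hlt
        have hroot : g.IsRoot z := by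
          have := isRoot_iterate_derivative_of_lt_rootMultiplicity (p := g) (t := z)
            (n := 0) (by omega)
          simpa using this
        have hder : g.derivative.IsRoot z := by
          have := isRoot_iterate_derivative_of_lt_rootMultiplicity (p := g) (t := z) (n := 1) hlt
          simpa using this
        have hfz : f.eval z = a := by
          have := hroot; simp [IsRoot, hg, sub_eq_zero] at this; exact this
        have hfa := (h z).1 hfz
        have : f.derivative.eval z = 0 := by
          have : g.derivative = f.derivative := by simp [hg]
          rw [← this]; exact hder
        rw [hfa] at this
        exact ha this
      have hnodup : g.roots.Nodup := by
        rw [Multiset.nodup_iff_count_le_one]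
        intro z
        rw [count_roots]
        exact hsimple z
      have hcard : g.roots.card = f.natDegree := by
        rw [← hgd]
        exact (splits_iff_card_roots.mp (IsAlgClosed.splits g))
      -- case on degree
      rcases Nat.lt_or_ge f.natDegree 2 with h2 | h2
      · -- degree exactly 1
        left
        have hdeg1 : f.natDegree = 1 := by omega
        have hle : f.natDegree ≤ 1 := by omega
        have hf1 : f = C (f.coeff 1) * X + C (f.coeff 0) :=
          eq_X_add_C_of_natDegree_le_one hle
        -- g has a root
        obtain ⟨z, hz⟩ : ∃ z, g.IsRoot z := by
          apply IsAlgClosed.exists_root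
          rw [degree_eq_natDegree hgne, hgd, hdeg1]
          exact one_ne_zero
        have hfz : f.eval z = a := by
          simp [IsRoot, hg, sub_eq_zero] at hz; exact hz
        have hfa := (h z).1 hfz
        have hc1 : f.coeff 1 = a := by
          rw [hf1] at hfa
          simpa using hfa
        exact ⟨f.coeff 0, by rw [hf1, hc1]; simp⟩
      · -- degree ≥ 2 : contradiction
        exfalso
        set p : ℂ[X] := f.derivative - C a with hp
        have hpne : p ≠ 0 := by
          intro h0
          have h1 : f.derivative = C a := by rwa [sub_eq_zero] at h0
          have h2' : (f - C a * X).derivative = 0 := by simp [h1]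
          have h3 := natDegree_eq_zero_of_derivative_eq_zero h2'
          have h4 : f = (f - C a * X) + C a * X := by ring
          have h5 : f.natDegree ≤ 1 := by
            calc f.natDegree = ((f - C a * X) + C a * X).natDegree := by rw [← h4]
              _ ≤ max (f - C a * X).natDegree (C a * X).natDegree := natDegree_add_le _ _
              _ ≤ 1 := by
                  simp only [h3, max_le_iff]
                  exact ⟨Nat.zero_le _, (natDegree_C_mul_le _ _).trans (by simp)⟩
          omega
        have hsub : g.roots.toFinset ⊆ p.roots.toFinset := by
          intro z hz
          rw [Multiset.mem_toFinset, mem_roots hgne] at hz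
          have hfz : f.eval z = a := by
            simp [IsRoot, hg, sub_eq_zero] at hz; exact hz
          have hfa := (h z).1 hfz
          rw [Multiset.mem_toFinset, mem_roots hpne]
          simp [IsRoot, hp, hfa]
        have h1 : g.roots.toFinset.card = f.natDegree := by
          rw [Multiset.toFinset_card_of_nodup hnodup, hcard]
        have h2' : p.roots.toFinset.card ≤ f.natDegree - 1 := by
          calc p.roots.toFinset.card ≤ p.roots.card := Multiset.toFinset_card_le _
            _ ≤ p.natDegree := p.card_roots' 
            _ ≤ f.natDegree - 1 := by
                have e1 : p.natDegree = f.derivative.natDegree := natDegree_sub_C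
                have e2 := natDegree_derivative_le (R := ℂ) f
                omega
        have := Finset.card_le_card hsub
        omega
  · rintro (⟨B, rfl⟩ | ⟨B, rfl, hBa⟩) z₀
    · constructor
      · intro _; simp
      · intro h'; simp at h'; exact absurd h' hab
    · constructor
      · intro h'; simp at h'; exact absurd h' hBa
      · intro h'; simp at h'; exact absurd h'.symm hb
end

section
/- Let a, b be nonzero complex numbers with a ≠ b and let C ≠ 0. The function f(z) = C·exp(b·z/(b-a)) + a satisfies: f never takes the value a, f and f' share the value b (f(z₀) = b ⇔ f'(z₀) = b), and all b-points of f' are simple. -/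
/-! With k = b/(b - a) we have f = C·exp(k z) + a, so f' = k (f - a) and f'' = k² (f - a), where
f - a = C·exp(k z) never vanishes. Since k (b - a) = b, the equation f' = b says exactly f - a = b - a. -/

open Complex

theorem iteratedDeriv_const_mul_cexp_add {n : ℕ} (hn : 0 < n) (C k a z : ℂ) :
    iteratedDeriv n (fun z => C * exp (k * z) + a) z = k ^ n * (C * exp (k * z)) := by
  simp only [add_comm _ a, iteratedDeriv_const_add hn, iteratedDeriv_const_mul_field,
    iteratedDeriv_cexp_const_mul]
  ring

theorem div_sub_mul_eq_self_iff {K : Type*} [Field K] {a b w : K} (hb : b ≠ 0) (hab : a ≠ b) :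
    b / (b - a) * w = b ↔ w + a = b := by
  have hba : b - a ≠ 0 := sub_ne_zero.mpr hab.symm
  rw [div_mul_eq_mul_div, div_eq_iff hba, mul_right_inj' hb, eq_sub_iff_add_eq]

theorem stmt_9_general (a b C : ℂ) (hb : b ≠ 0) (hab : a ≠ b) (hC : C ≠ 0)
    (f : ℂ → ℂ) (hf : f = fun z => C * Complex.exp (b * z / (b - a)) + a) :
    (∀ z : ℂ, f z ≠ a) ∧
    (∀ z₀ : ℂ, f z₀ = b ↔ deriv f z₀ = b) ∧
    (∀ z₀ : ℂ, deriv f z₀ = b → iteratedDeriv 2 f z₀ ≠ 0) := by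
  have hf' : f = fun z => C * exp (b / (b - a) * z) + a := by
    simp only [hf, mul_div_right_comm]
  have hCexp (z : ℂ) : C * exp (b / (b - a) * z) ≠ 0 := mul_ne_zero hC (exp_ne_zero _)
  have hderiv (z : ℂ) : deriv f z = b / (b - a) * (C * exp (b / (b - a) * z)) := by
    simpa [hf'] using iteratedDeriv_const_mul_cexp_add one_pos C (b / (b - a)) a z
  refine ⟨fun z h => hCexp z ?_, fun z => ?_, fun z _ => ?_⟩
  · simpa [hf'] using h
  · rw [hderiv, div_sub_mul_eq_self_iff hb hab, hf']
  · rw [hf', iteratedDeriv_const_mul_cexp_add two_pos]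
    exact mul_ne_zero (pow_ne_zero 2 (div_ne_zero hb (sub_ne_zero.mpr hab.symm))) (hCexp z)

theorem stmt_9 (a b C : ℂ) (ha : a ≠ 0) (hb : b ≠ 0) (hab : a ≠ b) (hC : C ≠ 0)
    (f : ℂ → ℂ) (hf : f = fun z => C * Complex.exp (b * z / (b - a)) + a) :
    (∀ z : ℂ, f z ≠ a) ∧
    (∀ z₀ : ℂ, f z₀ = b ↔ deriv f z₀ = b) ∧
    (∀ z₀ : ℂ, deriv f z₀ = b → iteratedDeriv 2 f z₀ ≠ 0) :=
  stmt_9_general a b C hb hab hC f hf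
end

section
/- Let a ∈ ℂ be nonzero, b = -a/8, C ≠ 0, and f(z) = 6aC·e^{z/6}(C·e^{z/6} - 1) + a. Then for all z₀ ∈ ℂ: f(z₀) = a implies f'(z₀) = a, and f'(z₀) = b implies f(z₀) = b. -/
/-! With `t = C e^{z/6}` one has `f = a (6t² - 6t + 1)` and `f' = a t (2t - 1)`. Since `t ≠ 0`,
`f = a` forces `t = 1`, where `f' = a`; and `f' = -a/8` reads `a (4t - 1)² = 0`, forcing `t = 1/4`,
where `f = -a/8`. -/

section PolynomialIdentities

variable {K : Type*} [Field K] [CharZero K] {a t : K}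

theorem mul_mul_two_mul_sub_one_eq_of_add_eq (ha : a ≠ 0) (ht : t ≠ 0)
    (h : 6 * a * t * (t - 1) + a = a) : a * t * (2 * t - 1) = a := by
  have ht1 : t = 1 := by
    have h0 : (6 * a * t) * (t - 1) = 0 := by linear_combination h
    have h6a : 6 * a * t ≠ 0 := by simp [ha, ht]
    exact sub_eq_zero.1 ((mul_eq_zero.1 h0).resolve_left h6a)
  rw [ht1]
  ring

theorem add_eq_of_mul_mul_two_mul_sub_one_eq (ha : a ≠ 0)
    (h : a * t * (2 * t - 1) = -a / 8) : 6 * a * t * (t - 1) + a = -a / 8 := by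
  have ht : 4 * t - 1 = 0 := by
    have hsq : a * (4 * t - 1) ^ 2 = 0 := by linear_combination 8 * h
    exact pow_eq_zero_iff two_ne_zero |>.1 ((mul_eq_zero.1 hsq).resolve_left ha)
  linear_combination a / 8 * (12 * t - 9) * ht

end PolynomialIdentities

theorem hasDerivAt_mul_exp_div_six_mul (a C z : ℂ) :
    HasDerivAt (fun z => 6 * a * C * Complex.exp (z / 6) * (C * Complex.exp (z / 6) - 1) + a)
      (a * (C * Complex.exp (z / 6)) * (2 * (C * Complex.exp (z / 6)) - 1)) z := by
  have he : HasDerivAt (fun z : ℂ => Complex.exp (z / 6)) (Complex.exp (z / 6) * (1 / 6)) z := by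
    simpa using ((hasDerivAt_id z).div_const 6).cexp
  exact (((he.const_mul (6 * a * C)).mul ((he.const_mul C).sub_const 1)).add_const a).congr_deriv
    (by ring)

theorem stmt_10 (a C : ℂ) (ha : a ≠ 0) (hC : C ≠ 0) (b : ℂ) (hb : b = -a / 8)
    (f : ℂ → ℂ)
    (hf : f = fun z => 6 * a * C * Complex.exp (z / 6) * (C * Complex.exp (z / 6) - 1) + a) :
    ∀ z₀ : ℂ, (f z₀ = a → deriv f z₀ = a) ∧ (deriv f z₀ = b → f z₀ = b) := by
  intro z₀
  set t := C * Complex.exp (z₀ / 6)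
  have ht : t ≠ 0 := mul_ne_zero hC (Complex.exp_ne_zero _)
  have hderiv : deriv f z₀ = a * t * (2 * t - 1) := by
    rw [hf]
    exact (hasDerivAt_mul_exp_div_six_mul a C z₀).deriv
  have hfz : f z₀ = 6 * a * t * (t - 1) + a := by
    rw [hf]
    ring
  rw [hderiv, hfz, hb]
  exact ⟨mul_mul_two_mul_sub_one_eq_of_add_eq ha ht, add_eq_of_mul_mul_two_mul_sub_one_eq ha⟩
end

section
/- Suppose f is holomorphic near z₀ with f(z₀) = f'(z₀) = a (a ≠ 0), f''(z₀) ≠ 0, and f satisfies the identity f''·(f' - f) = ((k+1)b/(a - b))·(f - a)(f' - b) in a neighbourhood of z₀, where b ≠ 0, a ≠ b, k ≥ 1. Then f''(z₀) satisfies the quadratic equation f''(z₀)^2 - a·f''(z₀) - (k+1)ab = 0, i.e. f''(z₀) = a/2 ± √(a² + 4(k+1)ab)/2. -/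
/-! Differentiating the identity at `z₀`: on the left the factor `f' - f` vanishes at `z₀` and
its derivative is `f'' - f'`, on the right `f - a` vanishes with derivative `f'`. This leaves
`f''(z₀) (f''(z₀) - a) = (k+1) b / (a - b) · a (a - b) = (k+1) a b`. -/

open Filter Topology

theorem deriv_deriv_mul_sub_eq_of_eventually_eq {𝕜 : Type*} [NontriviallyNormedField 𝕜]
    {f : 𝕜 → 𝕜} {x a b c : 𝕜} (hf : DifferentiableAt 𝕜 f x)
    (hf' : DifferentiableAt 𝕜 (deriv f) x) (hf'' : DifferentiableAt 𝕜 (deriv (deriv f)) x)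
    (hfx : f x = a) (hf'x : deriv f x = a)
    (heq : ∀ᶠ z in 𝓝 x, deriv (deriv f) z * (deriv f z - f z) =
      c * ((f z - a) * (deriv f z - b))) :
    deriv (deriv f) x * (deriv (deriv f) x - a) = c * (a * (a - b)) := by
  have hlhs : HasDerivAt (fun z => deriv (deriv f) z * (deriv f z - f z))
      (deriv (deriv (deriv f)) x * (deriv f x - f x) +
        deriv (deriv f) x * (deriv (deriv f) x - deriv f x)) x :=
    hf''.hasDerivAt.mul (hf'.hasDerivAt.sub hf.hasDerivAt)
  have hrhs : HasDerivAt (fun z => c * ((f z - a) * (deriv f z - b)))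
      (c * (deriv f x * (deriv f x - b) + (f x - a) * deriv (deriv f) x)) x :=
    ((hf.hasDerivAt.sub_const a).mul (hf'.hasDerivAt.sub_const b)).const_mul c
  have hderiv := (hlhs.congr_of_eventuallyEq (EventuallyEq.symm heq)).unique hrhs
  rw [hfx, hf'x] at hderiv
  linear_combination hderiv

theorem stmt_13_general (a b : ℂ) (hab : a ≠ b)
    (k : ℕ) (f : ℂ → ℂ) (z₀ : ℂ)
    (hf : AnalyticAt ℂ f z₀) (hf0 : f z₀ = a) (hf1 : deriv f z₀ = a)
    (heq : ∀ᶠ z in 𝓝 z₀, iteratedDeriv 2 f z * (deriv f z - f z) =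
      ((k + 1) * b / (a - b)) * ((f z - a) * (deriv f z - b))) :
    (iteratedDeriv 2 f z₀) ^ 2 - a * iteratedDeriv 2 f z₀ - (k + 1) * a * b = 0 := by
  rw [iteratedDeriv_succ, iteratedDeriv_one] at heq ⊢
  have key := deriv_deriv_mul_sub_eq_of_eventually_eq hf.differentiableAt
    hf.deriv.differentiableAt hf.deriv.deriv.differentiableAt hf0 hf1 heq
  rw [mul_left_comm, div_mul_cancel₀ _ (sub_ne_zero.mpr hab)] at key
  linear_combination key

theorem stmt_13 (a b : ℂ) (ha : a ≠ 0) (hb : b ≠ 0) (hab : a ≠ b)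
    (k : ℕ) (hk : 1 ≤ k) (f : ℂ → ℂ) (z₀ : ℂ)
    (hf : AnalyticAt ℂ f z₀) (hf0 : f z₀ = a) (hf1 : deriv f z₀ = a)
    (hf2 : iteratedDeriv 2 f z₀ ≠ 0)
    (heq : ∀ᶠ z in 𝓝 z₀, iteratedDeriv 2 f z * (deriv f z - f z) =
      ((k + 1) * b / (a - b)) * ((f z - a) * (deriv f z - b))) :
    (iteratedDeriv 2 f z₀) ^ 2 - a * iteratedDeriv 2 f z₀ - (k + 1) * a * b = 0 :=
  stmt_13_general a b hab k f z₀ hf hf0 hf1 heq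
end

section
/- Suppose f is holomorphic near z₀ with f(z₀) = f'(z₀) = b, f' has a simple b-point at z₀ (i.e. f''(z₀) ≠ 0), and f satisfies the identity f''·(f' - f) = ((k+1)b/(a - b))·(f - a)(f' - b) near z₀, with a, b nonzero, a ≠ b, k ≥ 1. Then f''(z₀) = -k·b. -/
open Filter Topology


private lemma analyticAt_deriv_aux {f : ℂ → ℂ} {z : ℂ} (h : AnalyticAt ℂ f z) :
    AnalyticAt ℂ (deriv f) z := by
  obtain ⟨s, hs, hfs⟩ := h.exists_mem_nhds_analyticOnNhd
  exact hfs.deriv z (mem_of_mem_nhds hs)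

theorem stmt_14 (a b : ℂ) (ha : a ≠ 0) (hb : b ≠ 0) (hab : a ≠ b)
    (k : ℕ) (hk : 1 ≤ k) (f : ℂ → ℂ) (z₀ : ℂ)
    (hf : AnalyticAt ℂ f z₀) (hf0 : f z₀ = b) (hf1 : deriv f z₀ = b)
    (hf2 : iteratedDeriv 2 f z₀ ≠ 0)
    (heq : ∀ᶠ z in 𝓝 z₀, iteratedDeriv 2 f z * (deriv f z - f z) =
      ((k + 1) * b / (a - b)) * ((f z - a) * (deriv f z - b))) :
    iteratedDeriv 2 f z₀ = -k * b := by
  have h2 : iteratedDeriv 2 f = deriv (deriv f) := by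
    rw [iteratedDeriv_succ, iteratedDeriv_one]
  rw [h2] at hf2 heq ⊢
  have hf' : AnalyticAt ℂ (deriv f) z₀ := analyticAt_deriv_aux hf
  have hf'' : AnalyticAt ℂ (deriv (deriv f)) z₀ := analyticAt_deriv_aux hf'
  have d0 : HasDerivAt f (deriv f z₀) z₀ := hf.differentiableAt.hasDerivAt
  have d1 : HasDerivAt (deriv f) (deriv (deriv f) z₀) z₀ :=
    hf'.differentiableAt.hasDerivAt
  have d2 : HasDerivAt (deriv (deriv f)) (deriv (deriv (deriv f)) z₀) z₀ :=
    hf''.differentiableAt.hasDerivAt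
  set C : ℂ := (k + 1) * b / (a - b) with hC
  set F'' : ℂ := deriv (deriv f) z₀ with hF
  -- derivative of LHS
  have dL : HasDerivAt (fun z => deriv (deriv f) z * (deriv f z - f z))
      (deriv (deriv (deriv f)) z₀ * (deriv f z₀ - f z₀) + F'' * (F'' - deriv f z₀)) z₀ :=
    d2.mul (d1.sub d0)
  have dR : HasDerivAt (fun z => C * ((f z - a) * (deriv f z - b)))
      (C * ((deriv f z₀) * (deriv f z₀ - b) + (f z₀ - a) * F'')) z₀ :=
    ((d0.sub_const a).mul (d1.sub_const b)).const_mul C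
  have hder : deriv (fun z => deriv (deriv f) z * (deriv f z - f z)) z₀
      = deriv (fun z => C * ((f z - a) * (deriv f z - b))) z₀ :=
    Filter.EventuallyEq.deriv_eq heq
  rw [dL.deriv, dR.deriv] at hder
  rw [hf0, hf1] at hder
  -- hder : X * (b - b) + F'' * (F'' - b) = C * (b * (b - b) + (b - a) * F'')
  have hab' : a - b ≠ 0 := sub_ne_zero.mpr hab
  have key : F'' * (F'' - b) = C * ((b - a) * F'') := by
    have := hder
    ring_nf at this ⊢
    linear_combination this
  have hCval : C * (b - a) = -(k + 1) * b := by
    rw [hC]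
    field_simp
    ring
  have : F'' - b = C * (b - a) := by
    have := mul_left_cancel₀ hf2 (by linear_combination key : F'' * (F'' - b) = F'' * (C * (b - a)))
    exact this
  rw [hCval] at this
  have : F'' = -(k + 1) * b + b := by linear_combination this
  rw [this]
  push_cast
  ring
end

section
/- Let Q(t) = ∏_{s=1}^{j} (t - r_s) with r₁, …, r_j nonzero and pairwise distinct complex numbers, and suppose Q(t)^{k+1} = c_d t^d + … + c_j t^j + c₀ has no monomials of degree strictly between 0 and j (where k ≥ 1). Then Q(t) = q_j t^j + q₀, i.e. Q is a binomial. -/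
open Polynomial

theorem stmt_15 (j k : ℕ) (hj : 1 ≤ j) (hk : 1 ≤ k) (r : Fin j → ℂ)
    (hr0 : ∀ i, r i ≠ 0) (hrinj : Function.Injective r)
    (Q : ℂ[X]) (hQ : Q = ∏ i, (X - C (r i)))
    (hcoeff : ∀ i : ℕ, 0 < i → i < j → (Q ^ (k + 1)).coeff i = 0) :
    ∃ qj q₀ : ℂ, Q = C qj * X ^ j + C q₀ := by
  have hQm : Q.Monic := by
    rw [hQ]; exact monic_prod_of_monic _ _ (fun i _ => monic_X_sub_C (r i))
  have hdeg : Q.natDegree = j := by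
    rw [hQ, natDegree_prod _ _ (fun i _ => X_sub_C_ne_zero (r i))]
    simp [natDegree_X_sub_C]
  have heval0 : Q.eval 0 ≠ 0 := by
    rw [hQ]
    simp only [eval_prod, eval_sub, eval_X, eval_C, zero_sub]
    exact Finset.prod_ne_zero_iff.2 fun i _ => neg_ne_zero.2 (hr0 i)
  -- X^(j-1) divides the derivative of Q^(k+1)
  have hdvd1 : (X : ℂ[X]) ^ (j - 1) ∣ derivative (Q ^ (k + 1)) := by
    rw [X_pow_dvd_iff]
    intro d hd
    rw [coeff_derivative, hcoeff (d + 1) (Nat.succ_pos d) (by omega), zero_mul]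
  have hder : derivative (Q ^ (k + 1)) = (C ((k : ℂ) + 1) * Q ^ k) * derivative Q := by
    rw [derivative_pow]
    push_cast
    ring_nf
  rw [hder] at hdvd1
  have hnd : ¬ (X : ℂ[X]) ∣ (C ((k : ℂ) + 1) * Q ^ k) := by
    rw [X_dvd_iff]
    simp only [coeff_zero_eq_eval_zero, eval_mul, eval_C, eval_pow]
    exact mul_ne_zero (Nat.cast_add_one_ne_zero k) (pow_ne_zero _ heval0)
  have hdvd2 : (X : ℂ[X]) ^ (j - 1) ∣ derivative Q :=
    (prime_X (R := ℂ)).pow_dvd_of_dvd_mul_left _ hnd hdvd1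
  rw [X_pow_dvd_iff] at hdvd2
  have hmid : ∀ i : ℕ, 0 < i → i < j → Q.coeff i = 0 := by
    intro i hi hij
    have h := hdvd2 (i - 1) (by omega)
    rw [coeff_derivative] at h
    have hi1 : i - 1 + 1 = i := by omega
    rw [hi1] at h
    exact (mul_eq_zero.1 h).resolve_right (Nat.cast_add_one_ne_zero (i - 1))
  refine ⟨1, Q.coeff 0, ?_⟩
  ext n
  simp only [coeff_add, coeff_C_mul, coeff_X_pow, coeff_C, one_mul]
  rcases Nat.lt_trichotomy n j with hn | hn | hn
  · rcases Nat.eq_zero_or_pos n with rfl | hn0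
    · rw [if_neg (by omega), if_pos rfl, zero_add]
    · rw [hmid n hn0 hn, if_neg (by omega), if_neg (by omega), add_zero]
  · subst hn
    have h1 : Q.coeff n = 1 := by
      have := hQm.coeff_natDegree
      rwa [hdeg] at this
    rw [h1, if_pos rfl, if_neg (by omega), add_zero]
  · rw [coeff_eq_zero_of_natDegree_lt (by omega : Q.natDegree < n),
      if_neg (by omega), if_neg (by omega), add_zero]
end

section
/- Let C, λ ≠ 0 and r, s be distinct nonzero complex numbers, f(t) = C t (t - r)(t - s) + a with a ≠ 0, and define D f(t) = λ t f'(t) (the polynomial representing the derivative of z ↦ f(e^{λz})). If (D f)(r) = a and (D f)(s) = a, then s = i·r or s = -i·r, and in that case the quadratic polynomial 9t² - 4(r+s)t + rs has nonzero discriminant (two distinct roots). -/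
theorem stmt_16 (a C l r s : ℂ) (ha : a ≠ 0) (hC : C ≠ 0) (hl : l ≠ 0)
    (hr : r ≠ 0) (hs : s ≠ 0) (hrs : r ≠ s)
    (Df : ℂ → ℂ) (hDf : Df = fun t => l * t * (C * (3 * t ^ 2 - 2 * (r + s) * t + r * s)))
    (h1 : Df r = a) (h2 : Df s = a) :
    (s = Complex.I * r ∨ s = -Complex.I * r) ∧
    (4 * (r + s)) ^ 2 - 4 * 9 * (r * s) ≠ 0 := by
  subst hDf
  simp only at h1 h2
  have h3 : l * C * (r - s) * (r ^ 2 + s ^ 2) = 0 := by linear_combination h1 - h2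
  have hrs' : r - s ≠ 0 := sub_ne_zero.mpr hrs
  have key : r ^ 2 + s ^ 2 = 0 := by
    rcases mul_eq_zero.mp h3 with h | h
    · rcases mul_eq_zero.mp h with h' | h'
      · rcases mul_eq_zero.mp h' with h'' | h''
        · exact absurd h'' hl
        · exact absurd h'' hC
      · exact absurd h' hrs'
    · exact h
  constructor
  · have : (s - Complex.I * r) * (s + Complex.I * r) = 0 := by
      have hI : Complex.I ^ 2 = -1 := Complex.I_sq
      linear_combination key - r ^ 2 * hI
    rcases mul_eq_zero.mp this with h | h
    · left; exact sub_eq_zero.mp h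
    · right
      have := eq_neg_of_add_eq_zero_left h
      rw [this]; ring
  · have : (4 * (r + s)) ^ 2 - 4 * 9 * (r * s) = -4 * (r * s) := by
      linear_combination 16 * key
    rw [this]
    simp [hr, hs]
end

section
/- Let C, λ ≠ 0 and r, s distinct nonzero complex numbers. If λC r²(4r² - 3(r+s)r + 2rs) = a and λC s²(4s² - 3(r+s)s + 2rs) = a for some a ≠ 0, then (s/r)⁶ = 1 and s/r ≠ 1; and for any such s/r, the polynomial 16t² - 9(r+s)t + 4rs has nonzero discriminant. -/
theorem stmt_17 (a C l r s : ℂ) (ha : a ≠ 0) (hC : C ≠ 0) (hl : l ≠ 0)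
    (hr : r ≠ 0) (hs : s ≠ 0) (hrs : r ≠ s)
    (h1 : l * C * r ^ 2 * (4 * r ^ 2 - 3 * (r + s) * r + 2 * r * s) = a)
    (h2 : l * C * s ^ 2 * (4 * s ^ 2 - 3 * (r + s) * s + 2 * r * s) = a) :
    ((s / r) ^ 6 = 1 ∧ s / r ≠ 1) ∧
    (9 * (r + s)) ^ 2 - 4 * 16 * (4 * r * s) ≠ 0 := by
  have hlC : l * C ≠ 0 := mul_ne_zero hl hC
  have key : l * C * (r ^ 3 * (r - s)) = l * C * (s ^ 3 * (s - r)) := by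
    linear_combination h1 - h2
  have key2 : r ^ 3 * (r - s) = s ^ 3 * (s - r) := mul_left_cancel₀ hlC key
  have h3 : (r - s) * (r ^ 3 + s ^ 3) = 0 := by linear_combination key2
  have hcube : r ^ 3 + s ^ 3 = 0 := by
    rcases mul_eq_zero.mp h3 with h | h
    · exact absurd (by linear_combination h) hrs
    · exact h
  refine ⟨⟨?_, ?_⟩, ?_⟩
  · field_simp
    linear_combination (s ^ 3 - r ^ 3) * hcube
  · intro h
    exact hrs ((div_eq_one_iff_eq hr).mp h).symm
  · intro hd
    have h4 : (r + s) * (r ^ 2 - r * s + s ^ 2) = 0 := by linear_combination hcube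
    rcases mul_eq_zero.mp h4 with h | h
    · have hs' : s = -r := by linear_combination h
      subst hs'
      have hr2 : r ^ 2 = 0 := by linear_combination (1 / 256 : ℂ) * hd
      exact hr (by simpa using hr2)
    · have h13 : (13 : ℂ) * (r * s) = 0 := by linear_combination -hd + 81 * h
      have : r * s = 0 := by
        have := mul_eq_zero.mp h13
        simpa using this
      rcases mul_eq_zero.mp this with h | h
      · exact hr h
      · exact hs h
end
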